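/- (Riccati equation for the Bessel ratio, used in Step 4 of the proof of Theorem B.) Define R(z) = B₀(z)/(z·B₁(z)) for z > 0 (so R(z) = I₀(z)/I₁(z)). Then for every z > 0, R is differentiable at z with HasDerivAt R (1 − R(z)² + R(z)/z) z. -/

import Mathlib

open intervalIntegral

/-- `B₀(z) = ∫_{−1}^{1} e^{zt} (1 − t²)^{−1/2} dt`, so that `I₀(z) = B₀(z)/π`. -/
noncomputable def B0 (z : ℝ) : ℝ :=
  ∫ t in (-1 : ℝ)..1, Real.exp (z * t) * (1 - t ^ 2) ^ (-(1 / 2) : ℝ)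

/-- `B₁(z) = ∫_{−1}^{1} e^{zt} √(1 − t²) dt`, so that `I₁(z) = z·B₁(z)/π`. -/
noncomputable def B1 (z : ℝ) : ℝ :=
  ∫ t in (-1 : ℝ)..1, Real.exp (z * t) * Real.sqrt (1 - t ^ 2)

/-- The Bessel ratio `R(z) = B₀(z)/(z·B₁(z)) = I₀(z)/I₁(z)`. -/
noncomputable def Rb (z : ℝ) : ℝ := B0 z / (z * B1 z)

/-!
Differentiating under the integral sign, `B₀′(z) = ∫ t e^{zt} (1 - t²)^{-1/2} dt` and
`B₁′(z) = ∫ t e^{zt} √(1 - t²) dt`. Integrating by parts against `√(1 - t²)`, which vanishes at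
`±1`, turns these into `B₀′ = z B₁` and `(z B₁)′ = B₀ - B₁`, and the quotient rule for
`R = B₀ / (z B₁)` gives the Riccati equation.
-/

open MeasureTheory Set Real

-- For `x < 0` both sides are junk zeros: `Real.rpow` gives `exp (log x * (-1/2)) * cos (-π/2)`.
lemma rpow_neg_one_half_eq_inv_sqrt (x : ℝ) : x ^ (-(1 / 2) : ℝ) = (√x)⁻¹ := by
  rcases lt_or_ge x 0 with hx | hx
  · rw [rpow_def_of_neg hx, sqrt_eq_zero'.mpr hx.le, inv_zero,
      show -(1 / 2) * π = -(π / 2) by ring, cos_neg, cos_pi_div_two, mul_zero]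
  · rw [sqrt_eq_rpow, ← rpow_neg hx]

lemma intervalIntegrable_inv_sqrt_one_sub_sq :
    IntervalIntegrable (fun t => (√(1 - t ^ 2))⁻¹) volume (-1) 1 := by
  refine intervalIntegral.intervalIntegrable_deriv_of_nonneg continuous_arcsin.continuousOn
    (fun t ht => ?_) (fun t _ => by positivity)
  simp only [min_eq_left, max_eq_right, show (-1 : ℝ) ≤ 1 by norm_num] at ht
  simpa using hasDerivAt_arcsin ht.1.ne' ht.2.ne

theorem hasDerivAt_integral_exp_mul {g : ℝ → ℝ} {a b : ℝ} (hg : IntervalIntegrable g volume a b)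
    (z : ℝ) :
    HasDerivAt (fun x => ∫ t in a..b, exp (x * t) * g t)
      (∫ t in a..b, t * exp (z * t) * g t) z := by
  set C := max |a| |b|
  have hmul : ∀ {φ : ℝ → ℝ}, Continuous φ → IntervalIntegrable (fun t => φ t * g t) volume a b :=
    fun hφ => hg.continuousOn_mul hφ.continuousOn
  refine (intervalIntegral.hasDerivAt_integral_of_dominated_loc_of_deriv_le
    (F' := fun x t => t * exp (x * t) * g t) (bound := fun t => C * exp ((|z| + 1) * C) * |g t|)
    (Metric.ball_mem_nhds z one_pos)
    (Filter.Eventually.of_forall fun x => (hmul (φ := fun t => exp (x * t)) (by fun_prop)).def'.1)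
    (hmul (by fun_prop)) (hmul (φ := fun t => t * exp (z * t)) (by fun_prop)).def'.1
    (Filter.Eventually.of_forall fun t ht x hx => ?_) (hg.norm.const_mul _)
    (Filter.Eventually.of_forall fun t _ x _ => ?_)).2
  · have ht : |t| ≤ C := by
      rcases le_total a b with h | h
      · rw [uIoc_of_le h] at ht
        exact abs_le_max_abs_abs ht.1.le ht.2
      · rw [uIoc_of_ge h] at ht
        exact (abs_le_max_abs_abs ht.1.le ht.2).trans_eq (max_comm _ _)
    have hx : |x| ≤ |z| + 1 := by
      have := abs_sub_abs_le_abs_sub x z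
      rw [Metric.mem_ball, dist_eq_norm, norm_eq_abs] at hx
      linarith
    have hexp : exp (x * t) ≤ exp ((|z| + 1) * C) := exp_le_exp.2 <|
      (le_abs_self _).trans <| (abs_mul x t).trans_le <|
        mul_le_mul hx ht (abs_nonneg t) (by positivity)
    rw [norm_mul, norm_mul, norm_eq_abs, norm_eq_abs, norm_eq_abs, abs_of_pos (exp_pos _)]
    gcongr
  · simpa [mul_comm, mul_assoc] using ((hasDerivAt_mul_const t).exp).mul_const (g t)

lemma hasDerivAt_sqrt_one_sub_sq {t : ℝ} (ht : t ∈ Ioo (-1 : ℝ) 1) :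
    HasDerivAt (fun s => √(1 - s ^ 2)) (-t * (√(1 - t ^ 2))⁻¹) t := by
  have h : 0 < 1 - t ^ 2 := by nlinarith [ht.1, ht.2]
  convert ((hasDerivAt_pow 2 t).const_sub 1).sqrt h.ne' using 1
  field_simp
  ring

lemma B0_eq_integral_inv_sqrt :
    B0 = fun z => ∫ t in (-1 : ℝ)..1, exp (z * t) * (√(1 - t ^ 2))⁻¹ := by
  funext z
  simp only [B0, rpow_neg_one_half_eq_inv_sqrt]

lemma B1_pos (z : ℝ) : 0 < B1 z :=
  intervalIntegral_pos_of_pos_on (Continuous.intervalIntegrable (by fun_prop) _ _)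
    (fun t ht => mul_pos (exp_pos _) (sqrt_pos.2 (by nlinarith [ht.1, ht.2]))) (by norm_num)

lemma integral_mul_exp_mul_inv_sqrt_eq_mul_B1 (z : ℝ) :
    ∫ t in (-1 : ℝ)..1, t * exp (z * t) * (√(1 - t ^ 2))⁻¹ = z * B1 z := by
  have hderiv : ∀ t ∈ Ioo (-1 : ℝ) 1, HasDerivAt (fun s => -(exp (z * s) * √(1 - s ^ 2)))
      (t * exp (z * t) * (√(1 - t ^ 2))⁻¹ - z * (exp (z * t) * √(1 - t ^ 2))) t := by
    intro t ht
    have h : 0 < 1 - t ^ 2 := by nlinarith [ht.1, ht.2]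
    refine ((((hasDerivAt_id' t).const_mul z).exp).mul (hasDerivAt_sqrt_one_sub_sq ht)).neg
      |>.congr_deriv ?_
    field_simp
    rw [sq_sqrt h.le]
    ring
  have h₁ : IntervalIntegrable (fun t => t * exp (z * t) * (√(1 - t ^ 2))⁻¹) volume (-1) 1 :=
    intervalIntegrable_inv_sqrt_one_sub_sq.continuousOn_mul (by fun_prop)
  have h₂ : IntervalIntegrable (fun t => exp (z * t) * √(1 - t ^ 2)) volume (-1) 1 :=
    Continuous.intervalIntegrable (by fun_prop) _ _
  have := integral_eq_sub_of_hasDerivAt_of_le (by norm_num) (by fun_prop) hderiv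
    (h₁.sub (h₂.const_mul z))
  rw [integral_sub h₁ (h₂.const_mul z), intervalIntegral.integral_const_mul] at this
  norm_num at this
  rw [B1]
  linarith

lemma mul_integral_mul_exp_mul_sqrt_eq_B0_sub (z : ℝ) :
    z * ∫ t in (-1 : ℝ)..1, t * exp (z * t) * √(1 - t ^ 2) = B0 z - 2 * B1 z := by
  have hderiv : ∀ t ∈ Ioo (-1 : ℝ) 1, HasDerivAt (fun s => exp (z * s) * (s * √(1 - s ^ 2)))
      (z * (t * exp (z * t) * √(1 - t ^ 2)) + 2 * (exp (z * t) * √(1 - t ^ 2))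
        - exp (z * t) * (√(1 - t ^ 2))⁻¹) t := by
    intro t ht
    have h : 0 < 1 - t ^ 2 := by nlinarith [ht.1, ht.2]
    refine (((hasDerivAt_id' t).const_mul z).exp).mul
      ((hasDerivAt_id' t).mul (hasDerivAt_sqrt_one_sub_sq ht)) |>.congr_deriv ?_
    dsimp only [Pi.mul_apply]
    field_simp
    rw [sq_sqrt h.le]
    ring
  have h₁ : IntervalIntegrable (fun t => t * exp (z * t) * √(1 - t ^ 2)) volume (-1) 1 :=
    Continuous.intervalIntegrable (by fun_prop) _ _
  have h₂ : IntervalIntegrable (fun t => exp (z * t) * √(1 - t ^ 2)) volume (-1) 1 :=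
    Continuous.intervalIntegrable (by fun_prop) _ _
  have h₃ : IntervalIntegrable (fun t => exp (z * t) * (√(1 - t ^ 2))⁻¹) volume (-1) 1 :=
    intervalIntegrable_inv_sqrt_one_sub_sq.continuousOn_mul (by fun_prop)
  have := integral_eq_sub_of_hasDerivAt_of_le (by norm_num) (by fun_prop) hderiv
    ((h₁.const_mul z).add (h₂.const_mul 2) |>.sub h₃)
  rw [integral_sub ((h₁.const_mul z).add (h₂.const_mul 2)) h₃,
    integral_add (h₁.const_mul z) (h₂.const_mul 2), intervalIntegral.integral_const_mul,
    intervalIntegral.integral_const_mul] at this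
  norm_num at this
  rw [B0_eq_integral_inv_sqrt, B1]
  linarith

lemma hasDerivAt_B0 (z : ℝ) : HasDerivAt B0 (z * B1 z) z := by
  rw [← integral_mul_exp_mul_inv_sqrt_eq_mul_B1, B0_eq_integral_inv_sqrt]
  exact hasDerivAt_integral_exp_mul intervalIntegrable_inv_sqrt_one_sub_sq z

lemma hasDerivAt_mul_B1 (z : ℝ) : HasDerivAt (fun x => x * B1 x) (B0 z - B1 z) z := by
  have hB1 := hasDerivAt_integral_exp_mul
    (Continuous.intervalIntegrable (u := fun t => √(1 - t ^ 2)) (by fun_prop) (-1) 1) z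
  refine ((hasDerivAt_id' z).mul hB1).congr_deriv ?_
  rw [mul_integral_mul_exp_mul_sqrt_eq_B0_sub, B1]
  ring

theorem hasDerivAt_Rb (z : ℝ) (hz : 0 < z) :
    HasDerivAt Rb (1 - (Rb z) ^ 2 + Rb z / z) z := by
  have hB1 : B1 z ≠ 0 := (B1_pos z).ne'
  refine (hasDerivAt_B0 z).div (hasDerivAt_mul_B1 z) (mul_ne_zero hz.ne' hB1) |>.congr_deriv ?_
  simp only [Rb]
  field_simp
  ring
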